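/- arXiv:1107.5862 — 7 statements merged into one kernel-verified Lean document; each statement's English description precedes it below -/
import Mathlib

section
/- Let N ≥ 1 be an integer. Each transposed matrix M_{N,j}ᵗ (1 ≤ j ≤ N) is an involution in GL_N(ℝ), and the group homomorphism from the free product UC(N) = ℤ/2ℤ ∗ ℤ/2ℤ ∗ ⋯ ∗ ℤ/2ℤ (N factors) to GL_N(ℝ) sending the generator of the j-th free factor to M_{N,j}ᵗ is injective. In particular, the subgroup of GL_N(ℝ) generated by M_{N,1}ᵗ, …, M_{N,N}ᵗ is isomorphic to the universal Coxeter group UC(N): there are no relations among these N involutions other than each squaring to the identity. -/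
open Matrix

/-- The matrix `M_{N,j}`: identity except in the `j`-th column, whose `j`-th entry
is `-1` and whose other entries are all `2`. -/
noncomputable def Mmat (N : ℕ) (j : Fin N) : Matrix (Fin N) (Fin N) ℝ :=
  Matrix.of fun i k => if k = j then (if i = j then -1 else 2) else (if i = k then 1 else 0)

/-- The matrix `B_N`: diagonal entries `-1`, off-diagonal entries `1`. -/
noncomputable def Bmat (N : ℕ) : Matrix (Fin N) (Fin N) ℝ :=
  Matrix.of fun i k => if i = k then -1 else 1

/-- The symmetric bilinear form `b_N(v,w) = vᵗ B_N w` on `ℝ^N`. -/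
noncomputable def bform (N : ℕ) (v w : Fin N → ℝ) : ℝ := v ⬝ᵥ (Bmat N).mulVec w

/-- The subgroup of `GL_N(ℝ)` generated by the transposed matrices `M_{N,j}ᵗ`. -/
noncomputable def Ggrp (N : ℕ) : Subgroup (GL (Fin N) ℝ) :=
  Subgroup.closure {g | ∃ j : Fin N, (g : Matrix (Fin N) (Fin N) ℝ) = (Mmat N j)ᵀ}

/-- The fundamental cone `D_N = {w : b_N(w, α_i) ≥ 0 for all i}`. -/
def Dcone (N : ℕ) : Set (Fin N → ℝ) := {w | ∀ i : Fin N, 0 ≤ bform N w (Pi.single i 1)}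

/-- The Tits cone `T_N = ⋃_{g ∈ G_N} g (D_N)`. -/
def Tcone (N : ℕ) : Set (Fin N → ℝ) :=
  {v | ∃ g ∈ Ggrp N, ∃ w ∈ Dcone N, v = (g : Matrix (Fin N) (Fin N) ℝ).mulVec w}

/-- The vector `c_j = u_N - (N-2) α_j`: coordinates `1` except the `j`-th which is `-(N-3)`. -/
noncomputable def cvec (N : ℕ) (j : Fin N) : Fin N → ℝ :=
  fun i => if i = j then -((N : ℝ) - 3) else 1

/-- The integral matrix `M_{N,j}`. -/
def MmatZ (N : ℕ) (j : Fin N) : Matrix (Fin N) (Fin N) ℤ :=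
  Matrix.of fun i k => if k = j then (if i = j then -1 else 2) else (if i = k then 1 else 0)

/-- The integral matrix `B_N`. -/
def BmatZ (N : ℕ) : Matrix (Fin N) (Fin N) ℤ :=
  Matrix.of fun i k => if i = k then -1 else 1

/-- The bilinear form `b_N` on `ℤ^N`. -/
def bformZ (N : ℕ) (v w : Fin N → ℤ) : ℤ := v ⬝ᵥ (BmatZ N).mulVec w

/-!
For `N ≥ 3` this is ping-pong: `M_{N,i}ᵗ` replaces the `i`-th coordinate of `v` by
`2 ∑ₖ vₖ - 3 vᵢ`, so it maps the cone of vectors with all coordinates `≥ 1` and strictly largest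
`j`-th coordinate (`j ≠ i`) into the analogous cone for `i`. For `N = 2`, `UC(2)` is the infinite
dihedral group, so it suffices that `M_{2,1}ᵗ M_{2,2}ᵗ` has infinite order, which holds because
it is unipotent and `≠ 1`. For `N ≤ 1` there is at most one free factor.
-/
lemma one_add_pow_of_mul_self_eq_zero {R : Type*} [Semiring R] {u : R} (hu : u * u = 0) (n : ℕ) :
    (1 + u) ^ n = 1 + n • u := by
  induction n with
  | zero => simp
  | succ n ih => rw [pow_succ, ih, succ_nsmul]; noncomm_ring; simp [hu]

lemma mul_zpow_mul_eq_zpow_neg_mul {W : Type*} [Group W] {x y : W} (hx : x * x = 1)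
    (hy : y * y = 1) (k : ℤ) :
    x * (x * y) ^ k = (x * y) ^ (-k) * x := by
  have hconj : SemiconjBy x (x * y) (y * x) := by
    rw [SemiconjBy, ← mul_assoc, hx, one_mul, mul_assoc, hx, mul_one]
  rw [(hconj.zpow_right k).eq, _root_.zpow_neg, ← _root_.inv_zpow, _root_.mul_inv_rev,
    inv_eq_of_mul_eq_one_right hx, inv_eq_of_mul_eq_one_right hy]

section Involution
variable {G : Type*} [Group G]

def zmodTwoHom (g : G) (hg : g * g = 1) : Multiplicative (ZMod 2) →* G :=
  AddMonoidHom.toMultiplicativeLeft <| ZMod.lift 2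
    ⟨zmultiplesHom (Additive G) (Additive.ofMul g), by
      rw [zmultiplesHom_apply, ← ofMul_zpow]
      simp [pow_two, hg]⟩

lemma zmodTwoHom_ofAdd_one (g : G) (hg : g * g = 1) :
    zmodTwoHom g hg (Multiplicative.ofAdd 1) = g := by
  change Additive.toMul (ZMod.lift 2 _ ((1 : ℤ) : ZMod 2)) = g
  rw [ZMod.lift_coe]
  simp

lemma zmodTwoHom_of_ne_one (g : G) (hg : g * g = 1) {x : Multiplicative (ZMod 2)} (hx : x ≠ 1) :
    zmodTwoHom g hg x = g := by
  obtain rfl : x = Multiplicative.ofAdd 1 := by revert x; decide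
  exact zmodTwoHom_ofAdd_one g hg

lemma zmodTwoHom_injective (g : G) (hg : g * g = 1) (hg1 : g ≠ 1) :
    Function.Injective (zmodTwoHom g hg) :=
  (injective_iff_map_eq_one _).2 fun _ hx =>
    by_contra fun hx1 => hg1 (zmodTwoHom_of_ne_one g hg hx1 ▸ hx)

end Involution

namespace Monoid.CoprodI

section Subsingleton
variable {ι : Type*} {H : ι → Type*} [∀ i, Group (H i)] [Subsingleton ι]

lemma eq_one_or_exists_of_eq_of_subsingleton (x : CoprodI H) :
    x = 1 ∨ ∃ i, ∃ h : H i, of h = x := by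
  induction x using induction_left with
  | one => exact .inl rfl
  | @mul i h x ih =>
    refine .inr ?_
    rcases ih with rfl | ⟨j, h', rfl⟩
    · exact ⟨i, h, (mul_one _).symm⟩
    · obtain rfl := Subsingleton.elim i j
      exact ⟨i, h * h', map_mul _ _ _⟩

lemma lift_injective_of_subsingleton {G : Type*} [Group G] {f : ∀ i, H i →* G}
    (hf : ∀ i, Function.Injective (f i)) : Function.Injective (lift f) := by
  refine (injective_iff_map_eq_one _).2 fun x hx => ?_
  rcases eq_one_or_exists_of_eq_of_subsingleton x with rfl | ⟨i, h, rfl⟩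
  · rfl
  · rw [lift_of, ← map_one (f i)] at hx
    rw [hf i hx, map_one]

end Subsingleton

section Dihedral

local notation "D∞" => CoprodI fun _ : Fin 2 => Multiplicative (ZMod 2)

abbrev dihedralGen (i : Fin 2) : D∞ := of (i := i) (Multiplicative.ofAdd 1)

lemma dihedralGen_mul_self (i : Fin 2) : dihedralGen i * dihedralGen i = 1 := by
  rw [← map_mul]
  exact (map_eq_one_iff _ (of_injective i)).2 (by decide)

lemma exists_eq_zpow_or_eq_zpow_mul (w : D∞) : ∃ k : ℤ,
    w = (dihedralGen 0 * dihedralGen 1) ^ k ∨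
      w = (dihedralGen 0 * dihedralGen 1) ^ k * dihedralGen 0 := by
  set x := dihedralGen 0
  set y := dihedralGen 1
  have hx : x * x = 1 := dihedralGen_mul_self 0
  have hy : y * y = 1 := dihedralGen_mul_self 1
  have hy_mul (k : ℤ) : y * (x * y) ^ k = (x * y) ^ (-(1 + k)) * x := by
    rw [← mul_zpow_mul_eq_zpow_neg_mul hx hy, _root_.zpow_one_add, ← mul_assoc, ← mul_assoc, hx,
      one_mul]
  induction w using induction_left with
  | one => exact ⟨0, .inl (zpow_zero _).symm⟩
  | @mul i m w ih =>
    obtain rfl | rfl : m = 1 ∨ m = Multiplicative.ofAdd 1 := by revert m; decide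
    · rwa [map_one, one_mul]
    obtain ⟨k, rfl | rfl⟩ := ih <;> fin_cases i
    · exact ⟨-k, .inr (mul_zpow_mul_eq_zpow_neg_mul hx hy k)⟩
    · exact ⟨-(1 + k), .inr (hy_mul k)⟩
    · refine ⟨-k, .inl ?_⟩
      change x * _ = _
      rw [← mul_assoc, mul_zpow_mul_eq_zpow_neg_mul hx hy, mul_assoc, hx, mul_one]
    · refine ⟨-(1 + k), .inl ?_⟩
      change y * _ = _
      rw [← mul_assoc, hy_mul, mul_assoc, hx, mul_one]

lemma lift_injective_of_not_isOfFinOrder {G : Type*} [Group G]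
    {f : Fin 2 → Multiplicative (ZMod 2) →* G} (h0 : f 0 (Multiplicative.ofAdd 1) ≠ 1)
    (hinf : ¬IsOfFinOrder (f 0 (Multiplicative.ofAdd 1) * f 1 (Multiplicative.ofAdd 1))) :
    Function.Injective (lift f) := by
  set a := f 0 (Multiplicative.ofAdd 1)
  set b := f 1 (Multiplicative.ofAdd 1)
  have ha : a * a = 1 := by rw [← map_mul, ← map_one (f 0)]; rfl
  have hr : lift f (dihedralGen 0 * dihedralGen 1) = a * b := by rw [map_mul, lift_of, lift_of]
  have hzpow := injective_zpow_iff_not_isOfFinOrder.2 hinf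
  refine (injective_iff_map_eq_one _).2 fun w hw => ?_
  obtain ⟨k, rfl | rfl⟩ := exists_eq_zpow_or_eq_zpow_mul w
  · rw [map_zpow, hr] at hw
    rw [hzpow (hw.trans (zpow_zero _).symm), zpow_zero]
  · rw [map_mul, map_zpow, hr, lift_of] at hw
    have hk : (a * b) ^ k = a := by
      rw [eq_inv_of_mul_eq_one_left hw, inv_eq_of_mul_eq_one_right ha]
    have hkk : k + k = 0 := hzpow (by simp only [_root_.zpow_add, hk, ha, zpow_zero])
    obtain rfl : k = 0 := by omega
    exact absurd (hk.symm.trans (zpow_zero _)) h0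

end Dihedral

end Monoid.CoprodI

lemma Mmat_mul_self (N : ℕ) (j : Fin N) : Mmat N j * Mmat N j = 1 := by
  ext i k
  by_cases hi : i = j <;> by_cases hk : k = j <;>
    simp [Mmat, Matrix.mul_apply, Matrix.one_apply, hi, hk, Finset.sum_ite, Finset.filter_ne',
      Finset.filter_eq']

lemma Mmat_transpose_mul_self (N : ℕ) (j : Fin N) : (Mmat N j)ᵀ * (Mmat N j)ᵀ = 1 := by
  rw [← transpose_mul, Mmat_mul_self, transpose_one]

lemma Mmat_transpose_mulVec (N : ℕ) (j : Fin N) (v : Fin N → ℝ) :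
    (Mmat N j)ᵀ *ᵥ v = Function.update v j (2 * ∑ k, v k - 3 * v j) := by
  ext i
  rcases eq_or_ne i j with rfl | hi
  · have h (k : Fin N) :
        (if k = i then -v k else 2 * v k) = 2 * v k - if k = i then 3 * v k else 0 := by
      split_ifs <;> ring
    simp [Mmat, Matrix.mulVec, dotProduct, h, Finset.sum_sub_distrib, Finset.mul_sum]
  · simp [Mmat, Matrix.mulVec, dotProduct, hi]

noncomputable def Mgl (N : ℕ) (j : Fin N) : GL (Fin N) ℝ :=
  ⟨(Mmat N j)ᵀ, (Mmat N j)ᵀ, Mmat_transpose_mul_self N j, Mmat_transpose_mul_self N j⟩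

lemma Mgl_mul_self (N : ℕ) (j : Fin N) : Mgl N j * Mgl N j = 1 :=
  Units.ext (Mmat_transpose_mul_self N j)

lemma Mgl_ne_one (N : ℕ) (j : Fin N) : Mgl N j ≠ 1 := by
  intro h
  have := congrArg (fun g : GL (Fin N) ℝ => (g : Matrix (Fin N) (Fin N) ℝ) j j) h
  norm_num [Mgl, Mmat] at this

noncomputable def reflHom (N : ℕ) :
    Monoid.CoprodI (fun _ : Fin N => Multiplicative (ZMod 2)) →* GL (Fin N) ℝ :=
  Monoid.CoprodI.lift fun j => zmodTwoHom (Mgl N j) (Mgl_mul_self N j)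

lemma reflHom_of (N : ℕ) (j : Fin N) :
    reflHom N (Monoid.CoprodI.of (i := j) (Multiplicative.ofAdd 1)) = Mgl N j := by
  rw [reflHom, Monoid.CoprodI.lift_of, zmodTwoHom_ofAdd_one]

lemma reflHom_injective_of_le_one {N : ℕ} (hN : N ≤ 1) : Function.Injective (reflHom N) :=
  have : Subsingleton (Fin N) := Fin.subsingleton_iff_le_one.2 hN
  Monoid.CoprodI.lift_injective_of_subsingleton fun j => zmodTwoHom_injective _ _ (Mgl_ne_one N j)

lemma not_isOfFinOrder_Mgl_mul_Mgl : ¬IsOfFinOrder (Mgl 2 0 * Mgl 2 1) := by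
  set U : Matrix (Fin 2) (Fin 2) ℝ := !![2, -2; 2, -2]
  have hval : ((Mgl 2 0 * Mgl 2 1 : GL (Fin 2) ℝ) : Matrix (Fin 2) (Fin 2) ℝ) = 1 + U := by
    ext i k
    fin_cases i <;> fin_cases k <;> norm_num [U, Mgl, Mmat, mul_apply, Fin.sum_univ_two]
  have hU : U * U = 0 := by
    ext i k
    fin_cases i <;> fin_cases k <;> norm_num [U, mul_apply, Fin.sum_univ_two]
  rw [isOfFinOrder_iff_pow_eq_one]
  rintro ⟨n, hn, hpow⟩
  have h := congrArg (fun g : GL (Fin 2) ℝ => (g : Matrix (Fin 2) (Fin 2) ℝ) 0 0) hpow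
  simp only [Units.val_pow_eq_pow_val, hval, one_add_pow_of_mul_self_eq_zero hU] at h
  norm_num [U] at h
  omega

lemma reflHom_injective_two : Function.Injective (reflHom 2) :=
  Monoid.CoprodI.lift_injective_of_not_isOfFinOrder
    (by rw [zmodTwoHom_ofAdd_one]; exact Mgl_ne_one 2 0)
    (by rw [zmodTwoHom_ofAdd_one, zmodTwoHom_ofAdd_one]; exact not_isOfFinOrder_Mgl_mul_Mgl)

def pingPongSet (N : ℕ) (i : Fin N) : Set (Fin N → ℝ) :=
  {v | (∀ k, 1 ≤ v k) ∧ ∀ k ≠ i, v k < v i}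

lemma pingPongSet_nonempty (N : ℕ) (i : Fin N) : (pingPongSet N i).Nonempty :=
  ⟨Function.update 1 i 2, fun k => by rcases eq_or_ne k i with rfl | hk <;> simp [*],
    fun k hk => by simp [hk]⟩

lemma pairwise_disjoint_pingPongSet (N : ℕ) :
    Pairwise (Function.onFun Disjoint (pingPongSet N)) :=
  fun i j hij => Set.disjoint_left.2 fun _ ⟨_, hvi⟩ ⟨_, hvj⟩ =>
    (hvi j hij.symm).not_gt (hvj i hij)

lemma Mmat_transpose_mulVec_mem_pingPongSet {N : ℕ} {i j : Fin N} (hij : i ≠ j)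
    {v : Fin N → ℝ} (hv : v ∈ pingPongSet N j) :
    (Mmat N i)ᵀ *ᵥ v ∈ pingPongSet N i := by
  obtain ⟨hv1, hvmax⟩ := hv
  have hsum : v i + v j ≤ ∑ k, v k := by
    rw [← Finset.sum_pair hij]
    exact Finset.sum_le_sum_of_subset_of_nonneg (Finset.subset_univ _)
      fun k _ _ => by linarith [hv1 k]
  have hvj : v j < 2 * ∑ k, v k - 3 * v i := by linarith [hvmax i hij]
  rw [Mmat_transpose_mulVec]
  refine ⟨fun k => ?_, fun k hk => ?_⟩
  · rcases eq_or_ne k i with rfl | hk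
    · rw [Function.update_self]; linarith [hv1 j]
    · rw [Function.update_of_ne hk]; exact hv1 k
  · rw [Function.update_self, Function.update_of_ne hk]
    rcases eq_or_ne k j with rfl | hkj
    · exact hvj
    · exact (hvmax k hkj).trans hvj

lemma reflHom_injective_of_three_le {N : ℕ} (hN : 3 ≤ N) : Function.Injective (reflHom N) := by
  let : MulAction (GL (Fin N) ℝ) (Fin N → ℝ) :=
    MulAction.compHom _ Matrix.GeneralLinearGroup.toLin.toMonoidHom
  have : Nontrivial (Fin N) := Fin.nontrivial_iff_two_le.2 (by omega)
  refine Monoid.CoprodI.lift_injective_of_ping_pong _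
    (.inl (by rw [Cardinal.mk_fin]; exact_mod_cast hN)) (pingPongSet N)
    (pingPongSet_nonempty N) (pairwise_disjoint_pingPongSet N) ?_
  rintro i j hij x hx _ ⟨v, hv, rfl⟩
  change zmodTwoHom _ _ x • v ∈ _
  rw [zmodTwoHom_of_ne_one _ _ hx]
  exact Mmat_transpose_mulVec_mem_pingPongSet hij hv

theorem stmt0_general (N : ℕ) :
    (∀ j : Fin N, (Mmat N j)ᵀ * (Mmat N j)ᵀ = 1) ∧
    ∃ φ : Monoid.CoprodI (fun _ : Fin N => Multiplicative (ZMod 2)) →* GL (Fin N) ℝ,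
      (∀ j : Fin N,
        ((φ (Monoid.CoprodI.of (i := j) (Multiplicative.ofAdd (1 : ZMod 2)))) :
          Matrix (Fin N) (Fin N) ℝ) = (Mmat N j)ᵀ) ∧
      Function.Injective φ := by
  refine ⟨Mmat_transpose_mul_self N, reflHom N, fun j => by rw [reflHom_of]; rfl, ?_⟩
  rcases (by omega : N ≤ 1 ∨ N = 2 ∨ 3 ≤ N) with hN | rfl | hN
  · exact reflHom_injective_of_le_one hN
  · exact reflHom_injective_two
  · exact reflHom_injective_of_three_le hN

/-- Each `M_{N,j}ᵗ` is an involution in `GL_N(ℝ)`, and the homomorphism from the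
universal Coxeter group `UC(N)` (the free product of `N` copies of `ℤ/2ℤ`) sending the
generator of the `j`-th free factor to `M_{N,j}ᵗ` is injective. -/
theorem stmt0 (N : ℕ) (hN : 1 ≤ N) :
    (∀ j : Fin N, (Mmat N j)ᵀ * (Mmat N j)ᵀ = 1) ∧
    ∃ φ : Monoid.CoprodI (fun _ : Fin N => Multiplicative (ZMod 2)) →* GL (Fin N) ℝ,
      (∀ j : Fin N,
        ((φ (Monoid.CoprodI.of (i := j) (Multiplicative.ofAdd (1 : ZMod 2)))) :
          Matrix (Fin N) (Fin N) ℝ) = (Mmat N j)ᵀ) ∧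
      Function.Injective φ :=
  stmt0_general N
end

section
/- For all integers N ≥ 1 and 1 ≤ j ≤ N, one has M_{N,j}² = I_N and M_{N,j} B_N M_{N,j}ᵗ = B_N; equivalently, each transposed matrix M_{N,j}ᵗ is an involutive linear map of ℝ^N preserving the bilinear form b_N (i.e. b_N(M_{N,j}ᵗ v, M_{N,j}ᵗ w) = b_N(v,w) for all v, w ∈ ℝ^N). -/
open Matrix

/-
Proof idea: `M_{N,j}ᵗ` is the `b_N`-reflection in the basis vector `e_j`, which has
`b_N(e_j, e_j) = -1`; indeed `M_{N,j} = 1 + 2 (B_N e_j) e_jᵗ`. For any symmetric `B` and any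
vector `a`, the rank-one perturbation `M = 1 + t (B a) aᵗ` with `t · aᵗ B a = -2` satisfies
`M² = 1` and `M B Mᵗ = B`, since both defects are multiples of `t (2 + t · aᵗ B a)`.
-/

namespace Matrix

variable {n R : Type*} [Fintype n] [DecidableEq n] [CommRing R]

def reflectionMatrix (B : Matrix n n R) (a : n → R) (t : R) : Matrix n n R :=
  1 + t • vecMulVec (B *ᵥ a) a

theorem reflectionMatrix_mul_self {B : Matrix n n R} {a : n → R} {t : R}
    (h : t * (a ⬝ᵥ B *ᵥ a) = -2) :
    reflectionMatrix B a t * reflectionMatrix B a t = 1 := by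
  have hsq : vecMulVec (B *ᵥ a) a * vecMulVec (B *ᵥ a) a =
      (a ⬝ᵥ B *ᵥ a) • vecMulVec (B *ᵥ a) a := by
    rw [vecMulVec_mul_vecMulVec, vecMulVec_smul]
  simp only [reflectionMatrix, add_mul, mul_add, one_mul, mul_one, smul_mul_smul_comm, hsq,
    smul_smul]
  rw [show t * t * (a ⬝ᵥ B *ᵥ a) = -2 * t by linear_combination t * h]
  module

theorem reflectionMatrix_mul_mul_transpose {B : Matrix n n R} (hB : B.IsSymm) {a : n → R} {t : R}
    (h : t * (a ⬝ᵥ B *ᵥ a) = -2) :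
    reflectionMatrix B a t * B * (reflectionMatrix B a t)ᵀ = B := by
  have ha : a ᵥ* B = B *ᵥ a := by rw [← vecMul_transpose, hB.eq]
  have hleft : vecMulVec (B *ᵥ a) a * B = vecMulVec (B *ᵥ a) (B *ᵥ a) := by
    rw [vecMulVec_mul, ha]
  have hright : B * vecMulVec a (B *ᵥ a) = vecMulVec (B *ᵥ a) (B *ᵥ a) := mul_vecMulVec _ _ _
  have hmid : vecMulVec (B *ᵥ a) (B *ᵥ a) * vecMulVec a (B *ᵥ a) =
      (a ⬝ᵥ B *ᵥ a) • vecMulVec (B *ᵥ a) (B *ᵥ a) := by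
    rw [vecMulVec_mul_vecMulVec, vecMulVec_smul, dotProduct_comm]
  simp only [reflectionMatrix, transpose_add, transpose_one, transpose_smul, transpose_vecMulVec,
    add_mul, mul_add, one_mul, mul_one, smul_mul_assoc, hleft, mul_smul_comm, hright, hmid,
    smul_smul, h]
  module

omit [DecidableEq n] in
theorem transpose_mulVec_dotProduct_mulVec_transpose_mulVec {M B : Matrix n n R}
    (hM : M * B * Mᵀ = B) (v w : n → R) :
    (Mᵀ *ᵥ v) ⬝ᵥ B *ᵥ (Mᵀ *ᵥ w) = v ⬝ᵥ B *ᵥ w := by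
  rw [mulVec_transpose, ← dotProduct_mulVec, mulVec_mulVec, mulVec_mulVec, hM]

end Matrix

theorem Bmat_isSymm (N : ℕ) : (Bmat N).IsSymm :=
  IsSymm.ext fun i k => by simp only [Bmat, of_apply, eq_comm]

theorem single_dotProduct_Bmat_mulVec_single (N : ℕ) (j : Fin N) :
    Pi.single j 1 ⬝ᵥ Bmat N *ᵥ Pi.single j 1 = -1 := by
  simp [single_dotProduct, Bmat]

theorem Mmat_eq_reflectionMatrix (N : ℕ) (j : Fin N) :
    Mmat N j = reflectionMatrix (Bmat N) (Pi.single j 1) 2 := by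
  ext i k
  rcases eq_or_ne k j with rfl | hk
  · by_cases hi : i = k <;> simp [hi, reflectionMatrix, Mmat, Bmat, one_apply, vecMulVec_apply]
    norm_num
  · simp [hk, reflectionMatrix, Mmat, one_apply, vecMulVec_apply]

theorem stmt1_general (N : ℕ) (j : Fin N) :
    Mmat N j * Mmat N j = 1 ∧
    Mmat N j * Bmat N * (Mmat N j)ᵀ = Bmat N ∧
    ((Mmat N j)ᵀ * (Mmat N j)ᵀ = 1 ∧
      ∀ v w : Fin N → ℝ,
        bform N ((Mmat N j)ᵀ.mulVec v) ((Mmat N j)ᵀ.mulVec w) = bform N v w) := by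
  have hq : (2 : ℝ) * (Pi.single j 1 ⬝ᵥ Bmat N *ᵥ Pi.single j 1) = -2 := by
    rw [single_dotProduct_Bmat_mulVec_single]; norm_num
  have hsq : Mmat N j * Mmat N j = 1 := by
    rw [Mmat_eq_reflectionMatrix]; exact reflectionMatrix_mul_self hq
  have hB : Mmat N j * Bmat N * (Mmat N j)ᵀ = Bmat N := by
    rw [Mmat_eq_reflectionMatrix]; exact reflectionMatrix_mul_mul_transpose (Bmat_isSymm N) hq
  exact ⟨hsq, hB, by rw [← transpose_mul, hsq, transpose_one],
    transpose_mulVec_dotProduct_mulVec_transpose_mulVec hB⟩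

/-- `M_{N,j}² = 1` and `M_{N,j} B_N M_{N,j}ᵗ = B_N`; equivalently `M_{N,j}ᵗ` is an
involutive linear map of `ℝ^N` preserving the bilinear form `b_N`. -/
theorem stmt1 (N : ℕ) (hN : 1 ≤ N) (j : Fin N) :
    Mmat N j * Mmat N j = 1 ∧
    Mmat N j * Bmat N * (Mmat N j)ᵀ = Bmat N ∧
    ((Mmat N j)ᵀ * (Mmat N j)ᵀ = 1 ∧
      ∀ v w : Fin N → ℝ,
        bform N ((Mmat N j)ᵀ.mulVec v) ((Mmat N j)ᵀ.mulVec w) = bform N v w) :=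
  stmt1_general N j
end

section
/- Let N ≥ 3 be an integer. Then the cone D_N = {w ∈ ℝ^N : b_N(w, α_i) ≥ 0 for all 1 ≤ i ≤ N} is exactly the set of non-negative linear combinations of the vectors c_1, …, c_N, i.e. D_N = {λ_1 c_1 + ⋯ + λ_N c_N : λ_1, …, λ_N ≥ 0}; moreover b_N(c_j, c_j) = −2(N−2)(N−3) for every 1 ≤ j ≤ N. -/
/-!
The vectors `c_j` are, up to the factor `2(N-2)`, dual to the standard basis:
`b_N(c_j, α_i) = 2(N-2) δ_ij`. Hence every `w` equals `∑_j b_N(w, α_j) / (2(N-2)) • c_j`, and `w`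
lies in `D_N` exactly when these coefficients are non-negative. Expanding the second argument of
`b_N(c_j, c_j)` in the standard basis leaves only `(c_j)_j · 2(N-2) = -(N-3) · 2(N-2)`.
-/


open Matrix

section

variable {N : ℕ}

lemma bform_single (v : Fin N → ℝ) (i : Fin N) :
    bform N v (Pi.single i 1) = (v ᵥ* Bmat N) i := by
  rw [bform, dotProduct_mulVec, dotProduct_single, mul_one]

lemma bform_eq_sum_mul_bform_single (v w : Fin N → ℝ) :
    bform N v w = ∑ i, w i * bform N v (Pi.single i 1) := by
  rw [bform, dotProduct_mulVec, dotProduct]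
  simp only [bform_single, mul_comm]

lemma vecMul_Bmat_apply (v : Fin N → ℝ) (i : Fin N) :
    (v ᵥ* Bmat N) i = ∑ k, v k - 2 * v i := by
  have hterm : ∀ k, v k * Bmat N k i = v k - if k = i then 2 * v k else 0 := by
    intro k
    by_cases hk : k = i <;> simp [Bmat, hk]; ring
  simp only [vecMul, dotProduct, hterm, Finset.sum_sub_distrib, Finset.sum_ite_eq',
    Finset.mem_univ, if_true]

lemma bform_cvec_single (i j : Fin N) :
    bform N (cvec N j) (Pi.single i 1) = if i = j then 2 * ((N : ℝ) - 2) else 0 := by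
  have hsum : ∑ k, cvec N j k = 2 := by
    have hterm : ∀ k, cvec N j k = 1 - if k = j then (N : ℝ) - 2 else 0 := by
      intro k
      by_cases hk : k = j <;> simp [cvec, hk]; ring
    simp only [hterm, Finset.sum_sub_distrib, Finset.sum_ite_eq', Finset.mem_univ, if_true,
      Finset.sum_const, Finset.card_univ, Fintype.card_fin, nsmul_eq_mul, mul_one]
    ring
  rw [bform_single, vecMul_Bmat_apply, hsum]
  by_cases hij : i = j <;> simp [cvec, hij]; ring

lemma bform_sum_smul_cvec_single (lam : Fin N → ℝ) (i : Fin N) :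
    bform N (∑ j, lam j • cvec N j) (Pi.single i 1) = 2 * ((N : ℝ) - 2) * lam i := by
  rw [bform_single, sum_vecMul, Finset.sum_apply]
  simp_rw [smul_vecMul, Pi.smul_apply, ← bform_single]
  simp only [bform_cvec_single, smul_eq_mul, mul_ite, mul_zero, Finset.sum_ite_eq,
    Finset.mem_univ, if_true]
  ring

lemma sum_smul_cvec_apply (lam : Fin N → ℝ) (i : Fin N) :
    (∑ j, lam j • cvec N j) i = ∑ j, lam j - ((N : ℝ) - 2) * lam i := by
  have hterm : ∀ j, lam j * cvec N j i = lam j - if i = j then ((N : ℝ) - 2) * lam j else 0 := by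
    intro j
    by_cases hij : i = j <;> simp [cvec, hij]; ring
  simp only [Finset.sum_apply, Pi.smul_apply, smul_eq_mul, hterm, Finset.sum_sub_distrib,
    Finset.sum_ite_eq, Finset.mem_univ, if_true]

lemma eq_sum_smul_cvec (hN : (N : ℝ) ≠ 2) (w : Fin N → ℝ) :
    w = ∑ j, (bform N w (Pi.single j 1) / (2 * ((N : ℝ) - 2))) • cvec N j := by
  have hN' : (N : ℝ) - 2 ≠ 0 := sub_ne_zero.mpr hN
  have hsum : ∑ j, bform N w (Pi.single j 1) = ((N : ℝ) - 2) * ∑ k, w k := by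
    simp only [bform_single, vecMul_Bmat_apply, Finset.sum_sub_distrib, ← Finset.mul_sum,
      Finset.sum_const, Finset.card_univ, Fintype.card_fin, nsmul_eq_mul]
    ring
  ext i
  rw [sum_smul_cvec_apply, ← Finset.sum_div, hsum, bform_single, vecMul_Bmat_apply]
  field_simp
  ring

lemma bform_cvec_self (j : Fin N) :
    bform N (cvec N j) (cvec N j) = -2 * ((N : ℝ) - 2) * ((N : ℝ) - 3) := by
  rw [bform_eq_sum_mul_bform_single]
  simp only [bform_cvec_single, mul_ite, mul_zero,
    Finset.sum_ite_eq', Finset.mem_univ, if_true, cvec]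
  ring

end

/-- For `N ≥ 3`, the cone `D_N` equals the set of non-negative linear combinations of
`c_1, …, c_N`, and `b_N(c_j, c_j) = -2(N-2)(N-3)`. -/
theorem stmt4 (N : ℕ) (hN : 3 ≤ N) :
    Dcone N = {w | ∃ lam : Fin N → ℝ, (∀ j, 0 ≤ lam j) ∧ w = ∑ j, lam j • cvec N j} ∧
    ∀ j : Fin N, bform N (cvec N j) (cvec N j) = -2 * ((N : ℝ) - 2) * ((N : ℝ) - 3) := by
  have hN2 : (0 : ℝ) < (N : ℝ) - 2 := by
    have : (3 : ℝ) ≤ N := by exact_mod_cast hN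
    linarith
  refine ⟨Set.ext fun w => ⟨fun hw => ?_, ?_⟩, fun j => ?_⟩
  · exact ⟨_, fun j => div_nonneg (hw j) (by positivity), eq_sum_smul_cvec (by linarith) w⟩
  · rintro ⟨lam, hlam, rfl⟩ i
    rw [bform_sum_smul_cvec_single]
    exact mul_nonneg (by positivity) (hlam i)
  · exact bform_cvec_self j
end

section
/- Let N ≥ 3 be an integer and let i ≠ j be indices in {1,…,N}. If v ∈ ℝ^N satisfies b_N(v, α_i) = 0, b_N(v, α_j) = 0 and b_N(v, v) = 0, then v is a scalar multiple of α_i + α_j. (In particular the codimension-2 faces α_i^⊥ ∩ α_j^⊥ of the cone D_N meet the isotropic cone of b_N exactly along the line ℝ(α_i + α_j).) -/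
open Matrix

/- `B_N = 𝟙𝟙ᵗ - 2I`, so `b_N(v, w) = S(v) S(w) - 2 ⟨v, w⟩` with `S` the coordinate sum.
Orthogonality to `α_i` and `α_j` gives `v_i = v_j = S(v)/2`, and isotropy gives
`∑ v_k² = S(v)²/2 = v_i² + v_j²`, so all other coordinates vanish. -/

lemma Bmat_mulVec_apply {N : ℕ} (w : Fin N → ℝ) (k : Fin N) :
    (Bmat N *ᵥ w) k = ∑ l, w l - 2 * w k := by
  have hrow : ∀ l, Bmat N k l * w l = w l - if k = l then 2 * w k else 0 := by
    intro l
    by_cases h : k = l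
    · subst h; simp only [Bmat, of_apply, if_true]; ring
    · simp [Bmat, h]
  simp only [mulVec, dotProduct, hrow, Finset.sum_sub_distrib, Finset.sum_ite_eq,
    Finset.mem_univ, if_true]

lemma bform_eq_sum_mul_sum_sub {N : ℕ} (v w : Fin N → ℝ) :
    bform N v w = (∑ k, v k) * (∑ l, w l) - 2 * ∑ k, v k * w k := by
  simp only [bform, dotProduct, Bmat_mulVec_apply, mul_sub, Finset.sum_sub_distrib]
  simp only [mul_left_comm _ (2 : ℝ)]
  rw [← Finset.sum_mul, ← Finset.mul_sum]

lemma bform_single_right {N : ℕ} (v : Fin N → ℝ) (m : Fin N) :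
    bform N v (Pi.single m 1) = ∑ k, v k - 2 * v m := by
  simp [bform_eq_sum_mul_sum_sub, Pi.single_apply]

lemma bform_self {N : ℕ} (v : Fin N → ℝ) :
    bform N v v = (∑ k, v k) ^ 2 - 2 * ∑ k, v k ^ 2 := by
  simp only [bform_eq_sum_mul_sum_sub, sq]

lemma eq_zero_of_sum_sq_eq_sq_add_sq {ι : Type*} [Fintype ι] [DecidableEq ι] {v : ι → ℝ}
    {i j : ι} (hij : i ≠ j) (h : ∑ k, v k ^ 2 = v i ^ 2 + v j ^ 2) {k : ι} (hki : k ≠ i)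
    (hkj : k ≠ j) : v k = 0 := by
  have hrest : ∑ l ∈ Finset.univ \ {i, j}, v l ^ 2 = 0 := by
    have := Finset.sum_sdiff (f := fun l => v l ^ 2) (Finset.subset_univ {i, j})
    rw [Finset.sum_pair hij, h] at this
    linarith
  have hk : k ∈ Finset.univ \ {i, j} := by simp [hki, hkj]
  exact pow_eq_zero_iff two_ne_zero |>.mp <|
    (Finset.sum_eq_zero_iff_of_nonneg fun l _ => sq_nonneg (v l)).mp hrest k hk

theorem stmt6_general (N : ℕ) (i j : Fin N) (hij : i ≠ j) (v : Fin N → ℝ)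
    (h1 : bform N v (Pi.single i 1) = 0) (h2 : bform N v (Pi.single j 1) = 0)
    (h3 : bform N v v = 0) :
    ∃ lam : ℝ, v = lam • (Pi.single i 1 + Pi.single j 1) := by
  rw [bform_single_right] at h1 h2
  rw [bform_self] at h3
  have hji : v j = v i := by linarith
  have hsq : ∑ k, v k ^ 2 = v i ^ 2 + v j ^ 2 := by
    rw [hji, show v i = (∑ k, v k) / 2 by linarith]
    linear_combination -h3 / 2
  refine ⟨v i, funext fun k => ?_⟩
  by_cases hki : k = i
  · subst hki; simp [hij]
  by_cases hkj : k = j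
  · subst hkj; simp [hki, hji]
  simp [hki, hkj, eq_zero_of_sum_sq_eq_sq_add_sq hij hsq hki hkj]

/-- A `b_N`-isotropic vector orthogonal to two distinct basis vectors `α_i, α_j`
is a scalar multiple of `α_i + α_j`. -/
theorem stmt6 (N : ℕ) (hN : 3 ≤ N) (i j : Fin N) (hij : i ≠ j) (v : Fin N → ℝ)
    (h1 : bform N v (Pi.single i 1) = 0) (h2 : bform N v (Pi.single j 1) = 0)
    (h3 : bform N v v = 0) :
    ∃ lam : ℝ, v = lam • (Pi.single i 1 + Pi.single j 1) :=
  stmt6_general N i j hij v h1 h2 h3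
end

section
/- Let N ≥ 3 be an integer and let a = (a_1,…,a_N) ∈ ℤ^N satisfy b_N(a,a) = 0 and a_i ≥ 1 for all i. Set σ = a_1 + ⋯ + a_N. Then there exists an index i with 2a_i > σ; and for any such i, the vector a' = M_{N,i}ᵗ a satisfies a'_i = 2σ − 3a_i, a'_k = a_k for k ≠ i, and its coordinate sum equals 3σ − 4a_i ≤ σ − 2. -/
/-!
Since `(B a)ᵢ = σ - 2aᵢ`, isotropy reads `∑ aᵢ (σ - 2aᵢ) = 0`. If no `2aᵢ` exceeded `σ`, every
term would be nonnegative, hence zero, forcing `σ = 2aᵢ` for all `i` and so `Nσ = 2σ` with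
`σ > 0`, impossible for `N ≥ 3`. The matrix `M_{N,i}ᵗ` adds `2σ - 4aᵢ` to the `i`-th
coordinate only, which gives the formulas; the bound is `σ < 2aᵢ` read in the integers.
-/

open Matrix

theorem Fintype.sum_ite_mul {ι R : Type*} [Fintype ι] [DecidableEq ι] [CommRing R]
    (f : ι → R) (i : ι) (c d : R) :
    ∑ j, (if j = i then c else d) * f j = d * ∑ j, f j + (c - d) * f i := by
  calc ∑ j, (if j = i then c else d) * f j
      = ∑ j, (d * f j + if j = i then (c - d) * f j else 0) := by
        refine Finset.sum_congr rfl fun j _ => ?_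
        split_ifs <;> ring
    _ = d * ∑ j, f j + (c - d) * f i := by
        rw [Finset.sum_add_distrib, ← Finset.mul_sum, Finset.sum_ite_eq' Finset.univ i]
        simp

theorem BmatZ_mulVec_apply {N : ℕ} (v : Fin N → ℤ) (i : Fin N) :
    (BmatZ N *ᵥ v) i = ∑ k, v k - 2 * v i := by
  simp only [BmatZ, mulVec, dotProduct, of_apply, eq_comm (a := i), Fintype.sum_ite_mul]
  ring

theorem bformZ_self {N : ℕ} (v : Fin N → ℤ) :
    bformZ N v v = ∑ i, v i * (∑ k, v k - 2 * v i) := by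
  simp only [bformZ, dotProduct, BmatZ_mulVec_apply]

theorem MmatZ_transpose_mulVec {N : ℕ} (v : Fin N → ℤ) (i : Fin N) :
    (MmatZ N i)ᵀ *ᵥ v = v + Pi.single i (2 * ∑ k, v k - 4 * v i) := by
  ext k
  rcases eq_or_ne k i with rfl | hk
  · simp only [MmatZ, mulVec, dotProduct, transpose_apply, of_apply, if_true,
      Fintype.sum_ite_mul, Pi.add_apply, Pi.single_eq_same]
    ring
  · simp [MmatZ, mulVec, dotProduct, hk]

theorem exists_sum_lt_two_mul_of_bformZ_self_eq_zero {N : ℕ} (hN : 3 ≤ N) (v : Fin N → ℤ)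
    (hiso : bformZ N v v = 0) (hpos : ∀ i, 0 < v i) :
    ∃ i, ∑ k, v k < 2 * v i := by
  by_contra! hle
  set σ := ∑ k, v k
  have hterms : ∀ i ∈ Finset.univ, v i * (σ - 2 * v i) = 0 :=
    (Finset.sum_eq_zero_iff_of_nonneg fun i _ =>
      mul_nonneg (hpos i).le (sub_nonneg.mpr (hle i))).mp (bformZ_self v ▸ hiso)
  have hhalf : ∀ i, σ = 2 * v i := fun i => by
    have := hterms i (Finset.mem_univ i)
    rcases mul_eq_zero.mp this with h | h <;> [exact absurd h (hpos i).ne'; linarith]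
  have hσ : (N : ℤ) * σ = 2 * σ := by
    calc (N : ℤ) * σ = ∑ i, 2 * v i := by simp [← hhalf]
      _ = 2 * σ := by rw [← Finset.mul_sum]
  have hσpos : 0 < σ := Finset.sum_pos (fun i _ => hpos i) ⟨⟨0, by omega⟩, Finset.mem_univ _⟩
  have : (3 : ℤ) ≤ N := by exact_mod_cast hN
  nlinarith

/-- Descent step: for an integral isotropic vector `a` with all coordinates `≥ 1`,
some index satisfies `2aᵢ > σ`, and applying `M_{N,i}ᵗ` replaces `aᵢ` by `2σ - 3aᵢ`,
keeps the other coordinates, and drops the coordinate sum to `3σ - 4aᵢ ≤ σ - 2`. -/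
theorem stmt9 (N : ℕ) (hN : 3 ≤ N) (a : Fin N → ℤ)
    (hiso : bformZ N a a = 0) (hpos : ∀ i, 1 ≤ a i) :
    (∃ i : Fin N, (∑ k, a k) < 2 * a i) ∧
    ∀ i : Fin N, (∑ k, a k) < 2 * a i →
      ((MmatZ N i)ᵀ.mulVec a) i = 2 * (∑ k, a k) - 3 * a i ∧
      (∀ k : Fin N, k ≠ i → ((MmatZ N i)ᵀ.mulVec a) k = a k) ∧
      (∑ k, ((MmatZ N i)ᵀ.mulVec a) k) = 3 * (∑ k, a k) - 4 * a i ∧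
      3 * (∑ k, a k) - 4 * a i ≤ (∑ k, a k) - 2 := by
  refine ⟨exists_sum_lt_two_mul_of_bformZ_self_eq_zero hN a hiso hpos, fun i hi => ?_⟩
  simp only [MmatZ_transpose_mulVec, Pi.add_apply]
  refine ⟨by rw [Pi.single_eq_same]; ring, fun k hk => by simp [hk], ?_, by omega⟩
  rw [Finset.sum_add_distrib, Finset.sum_pi_single']
  simp only [Finset.mem_univ, if_true]
  ring
end

section
/- Let A = M_{3,1}·M_{3,2}·M_{3,3} be the product of the three 3×3 integer matrices M_{3,1}, M_{3,2}, M_{3,3}. Then 9 + 4√5 is a real eigenvalue of A, and every complex eigenvalue λ of A satisfies |λ| ≤ 9 + 4√5; in particular the spectral radius of A equals 9 + 4√5 > 1. -/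
/-!
Multiplied out, `A = [[-1,-2,-6],[2,3,10],[2,6,15]]`, with characteristic polynomial
`λ³ - 17λ² - 17λ + 1 = (λ + 1)(λ² - 18λ + 1)`. All its roots `-1, 9 ± 4√5` are real and
`9 + 4√5` is the largest in absolute value; `(4√5 - 12, 4√5 - 4, 8)` is an eigenvector for it.
-/

open Matrix

def involutionProduct (R : Type*) [Ring R] : Matrix (Fin 3) (Fin 3) R :=
  !![-1, -2, -6; 2, 3, 10; 2, 6, 15]

lemma involutions_mul_mul_eq_involutionProduct {R : Type*} [Ring R] :
    !![(-1 : R), 0, 0; 2, 1, 0; 2, 0, 1] * !![(1 : R), 2, 0; 0, -1, 0; 0, 2, 1] *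
      !![(1 : R), 0, 2; 0, 1, 2; 0, 0, -1] = involutionProduct R := by
  simp only [involutionProduct, mul_fin_three]
  norm_num

lemma map_involutionProduct {R S : Type*} [Ring R] [Ring S] (f : R →+* S) :
    (involutionProduct R).map f = involutionProduct S := by
  ext i j
  fin_cases i <;> fin_cases j <;> simp [involutionProduct, map_ofNat]

lemma det_scalar_sub_involutionProduct {R : Type*} [CommRing R] (t : R) :
    (scalar (Fin 3) t - involutionProduct R).det = (t + 1) * (t ^ 2 - 18 * t + 1) := by
  simp only [involutionProduct, det_fin_three, scalar_apply, Matrix.sub_apply, of_apply,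
    Fin.isValue, cons_val', cons_val_zero, cons_val_one, cons_val, cons_val_fin_one, ne_eq,
    Fin.reduceEq, not_false_eq_true, diagonal_apply_eq, diagonal_apply_ne]
  ring

lemma det_scalar_sub_eq_zero_of_mulVec_eq_smul {n K : Type*} [Fintype n] [DecidableEq n]
    [Field K] {M : Matrix n n K} {lam : K} {y : n → K} (hy : y ≠ 0) (h : M *ᵥ y = lam • y) :
    (scalar n lam - M).det = 0 :=
  exists_mulVec_eq_zero_iff.mp ⟨y, hy, by simp [sub_mulVec, h]⟩

lemma eq_or_eq_of_sq_sub_eighteen_mul_add_one_eq_zero {z : ℂ} (hz : z ^ 2 - 18 * z + 1 = 0) :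
    z = ↑(9 + 4 * √5) ∨ z = ↑(9 - 4 * √5) := by
  have h5 : ((√5 : ℝ) : ℂ) ^ 2 = 5 := by norm_cast; simp
  have hfactor : (z - ↑(9 + 4 * √5)) * (z - ↑(9 - 4 * √5)) = 0 := by
    push_cast; linear_combination hz - 16 * h5
  simpa [sub_eq_zero] using hfactor

lemma norm_le_of_mul_sq_sub_eighteen_mul_add_one_eq_zero {z : ℂ}
    (hz : (z + 1) * (z ^ 2 - 18 * z + 1) = 0) : ‖z‖ ≤ 9 + 4 * √5 := by
  have hsqrt_le : 4 * √5 ≤ 9 := by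
    nlinarith [Real.sq_sqrt (show (0 : ℝ) ≤ 5 by norm_num), Real.sqrt_nonneg 5]
  have hsqrt : 0 ≤ √5 := Real.sqrt_nonneg 5
  rcases mul_eq_zero.mp hz with h | h
  · rw [eq_neg_of_add_eq_zero_left h, norm_neg, norm_one]
    linarith
  · rcases eq_or_eq_of_sq_sub_eighteen_mul_add_one_eq_zero h with rfl | rfl
    · rw [Complex.norm_real, Real.norm_of_nonneg (by positivity)]
    · rw [Complex.norm_real, Real.norm_of_nonneg (by linarith)]
      linarith

lemma involutionProduct_mulVec_eigenvector :
    involutionProduct ℝ *ᵥ ![4 * √5 - 12, 4 * √5 - 4, 8] =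
      (9 + 4 * √5) • ![4 * √5 - 12, 4 * √5 - 4, 8] := by
  have h5 := Real.sq_sqrt (show (0 : ℝ) ≤ 5 by norm_num)
  ext i
  fin_cases i <;>
    simp only [involutionProduct, mulVec, dotProduct, Fin.sum_univ_three, Fin.zero_eta,
      Fin.mk_one, Fin.reduceFinMk, Fin.isValue, of_apply, cons_val', cons_val_fin_one,
      cons_val_zero, cons_val_one, cons_val, Pi.smul_apply, smul_eq_mul]
  · linear_combination -16 * h5
  · linear_combination -16 * h5
  · ring

/-- `9 + 4√5` is a real eigenvalue of `A = M_{3,1}·M_{3,2}·M_{3,3}`, and every complex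
eigenvalue `λ` of `A` satisfies `|λ| ≤ 9 + 4√5`; in particular the spectral radius of
`A` is `9 + 4√5 > 1`. -/
theorem stmt14
    (A : Matrix (Fin 3) (Fin 3) ℝ)
    (hA : A = !![(-1 : ℝ), 0, 0; 2, 1, 0; 2, 0, 1] *
              !![(1 : ℝ), 2, 0; 0, -1, 0; 0, 2, 1] *
              !![(1 : ℝ), 0, 2; 0, 1, 2; 0, 0, -1]) :
    (∃ x : Fin 3 → ℝ, x ≠ 0 ∧ A.mulVec x = (9 + 4 * Real.sqrt 5) • x) ∧
    (∀ lam : ℂ, ∀ y : Fin 3 → ℂ, y ≠ 0 →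
      (A.map (fun r : ℝ => (r : ℂ))).mulVec y = lam • y →
        ‖lam‖ ≤ 9 + 4 * Real.sqrt 5) ∧
    1 < 9 + 4 * Real.sqrt 5 := by
  rw [involutions_mul_mul_eq_involutionProduct] at hA
  subst hA
  refine ⟨⟨_, fun h ↦ by simpa using congrFun h 2, involutionProduct_mulVec_eigenvector⟩,
    fun lam y hy h ↦ ?_, by linarith [Real.sqrt_nonneg 5]⟩
  have hC : involutionProduct ℂ *ᵥ y = lam • y := by
    rw [← map_involutionProduct Complex.ofRealHom]
    exact h
  have hdet := det_scalar_sub_eq_zero_of_mulVec_eq_smul hy hC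
  rw [det_scalar_sub_involutionProduct] at hdet
  exact norm_le_of_mul_sq_sub_eighteen_mul_add_one_eq_zero hdet
end

section
/- Let A be the 3×3 integer matrix whose diagonal entries are 0 and whose off-diagonal entries are all 2, i.e. A = [[0,2,2],[2,0,2],[2,2,0]]. Then there is no vector x ∈ ℤ³ with xᵗ A x = −2. (The intersection form of a generic Wehler surface does not represent the value −2, hence such a surface contains no smooth rational curve of self-intersection −2.) -/
open Matrix

theorem dotProduct_mulVec_wehlerGram {R : Type*} [CommRing R] (x : Fin 3 → R) :
    x ⬝ᵥ (!![0, 2, 2; 2, 0, 2; 2, 2, 0] : Matrix (Fin 3) (Fin 3) R).mulVec x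
      = 4 * (x 0 * x 1 + x 0 * x 2 + x 1 * x 2) := by
  simp only [dotProduct, mulVec, Fin.sum_univ_three, of_apply, cons_val', cons_val_zero,
    cons_val_one, cons_val_two, empty_val', cons_val_fin_one, tail_cons, vecHead]
  ring

/-- The intersection form of a generic Wehler surface, with Gram matrix
`[[0,2,2],[2,0,2],[2,2,0]]`, does not represent `-2` over `ℤ`. -/
theorem stmt16 :
    ¬ ∃ x : Fin 3 → ℤ,
      x ⬝ᵥ (!![(0 : ℤ), 2, 2; 2, 0, 2; 2, 2, 0] : Matrix (Fin 3) (Fin 3) ℤ).mulVec x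
        = -2 := by
  rintro ⟨x, hx⟩
  rw [dotProduct_mulVec_wehlerGram] at hx
  have h4 : (4 : ℤ) ∣ -2 := ⟨_, hx.symm⟩
  norm_num at h4
end
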